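/- arXiv:1309.6061 — 2 statements merged into one kernel-verified Lean document; each statement's English description precedes it below -/
import Mathlib

section
/- Let u : [0,∞) → ℝ be differentiable with u(0) = x ≥ 0 and u'(t) ≤ 1 − u(t)²/2 for all t ≥ 0. Then u(t) ≤ max(x, √2) for all t ≥ 0. (This yields a uniform-in-time bound for the first moment of the TCP process.) -/
/-- If `u` is differentiable with `u(0) = x ≥ 0` and `u' ≤ 1 − u²/2` on
`[0,∞)`, then `u(t) ≤ max (x, √2)` for all `t ≥ 0` (uniform-in-time bound for
the first moment of the TCP process). -/
theorem moment_bound_ode (u : ℝ → ℝ) (hu : Differentiable ℝ u)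
    (x : ℝ) (hx : 0 ≤ x) (h0 : u 0 = x)
    (hineq : ∀ t : ℝ, 0 ≤ t → deriv u t ≤ 1 - (u t) ^ 2 / 2) :
    ∀ t : ℝ, 0 ≤ t → u t ≤ max x (Real.sqrt 2) := by
  intro t ht
  set M := max x (Real.sqrt 2) with hM
  have hs2 : Real.sqrt 2 ≤ M := le_max_right _ _
  have hxM : x ≤ M := le_max_left _ _
  have hsq2 : (Real.sqrt 2) ^ 2 = 2 := Real.sq_sqrt (by norm_num)
  have hs2pos : (0:ℝ) < Real.sqrt 2 := Real.sqrt_pos.mpr (by norm_num)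
  have key : ∀ ε > 0, u t ≤ M + ε * (t + 1) := by
    intro ε hε
    have ha : u 0 ≤ M + ε * (0 + 1) := by rw [h0]; nlinarith
    have hB : ∀ s : ℝ, HasDerivAt (fun s : ℝ => M + ε * (s + 1)) ε s := by
      intro s
      simpa using (((hasDerivAt_id s).add_const 1).const_mul ε).const_add M
    have bound : ∀ s ∈ Set.Ico (0:ℝ) t, u s = M + ε * (s + 1) →
        deriv u s < ε := by
      intro s hs heq
      have hs0 : 0 ≤ s := hs.1
      have hub : Real.sqrt 2 ≤ u s := by rw [heq]; nlinarith
      have h1 : deriv u s ≤ 1 - (u s) ^ 2 / 2 := hineq s hs0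
      nlinarith
    exact image_le_of_deriv_right_lt_deriv_boundary
      hu.continuous.continuousOn
      (fun s _ => (hu s).hasDerivAt.hasDerivWithinAt)
      ha hB bound (Set.right_mem_Icc.mpr ht)
  by_contra hlt
  push_neg at hlt
  have hε : (u t - M) / (2 * (t + 1)) > 0 := by
    apply div_pos (by linarith) (by linarith)
  have h2 := key _ hε
  have h3 : (u t - M) / (2 * (t + 1)) * (t + 1) = (u t - M) / 2 := by
    field_simp
  rw [h3] at h2
  linarith
end

section
/- Let φ¹,…,φⁿ be continuous flows leaving a compact set K ⊆ ℝᵈ invariant, let γ⁺(x) be the positive trajectory of x under the flows, and define the accessible set Γ = ⋂_{x ∈ K} closure(γ⁺(x)). Then Γ is compact, and Γ is invariant under each flow: for every y ∈ Γ, every i ∈ {1,…,n} and every t ≥ 0, φⁱ_t(y) ∈ Γ. -/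
/-- `Reach φ y z` means `z` is reachable from `y` by following finitely many of
the flows `φ i` for nonnegative times. -/
inductive Reach {E : Type*} {n : ℕ} (φ : Fin n → ℝ → E → E) : E → E → Prop
  | refl (y : E) : Reach φ y y
  | step (y z : E) (i : Fin n) (t : ℝ) (ht : 0 ≤ t)
      (h : Reach φ y z) : Reach φ y (φ i t z)

/-- If the continuous flows `φ¹,…,φⁿ` leave a (nonempty) compact set `K ⊆ ℝᵈ`
invariant, then the accessible set `Γ = ⋂_{x ∈ K} closure (γ⁺(x))` is compact
and invariant under each flow: `φⁱ_t(y) ∈ Γ` for all `y ∈ Γ`, `i`, `t ≥ 0`. -/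
theorem accessible_set_compact_invariant {d n : ℕ}
    (φ : Fin n → ℝ → (Fin d → ℝ) → (Fin d → ℝ))
    (hcont : ∀ i, Continuous fun p : ℝ × (Fin d → ℝ) => φ i p.1 p.2)
    (hflow0 : ∀ i, φ i 0 = id)
    (hflow : ∀ i (s t : ℝ), 0 ≤ s → 0 ≤ t → φ i (t + s) = φ i t ∘ φ i s)
    (K : Set (Fin d → ℝ)) (hK : IsCompact K) (hKne : K.Nonempty)
    (hKinv : ∀ i (t : ℝ), 0 ≤ t → ∀ x ∈ K, φ i t x ∈ K) :
    IsCompact (⋂ x ∈ K, closure {w | Reach φ x w}) ∧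
    ∀ y ∈ ⋂ x ∈ K, closure {w | Reach φ x w}, ∀ i (t : ℝ), 0 ≤ t →
      φ i t y ∈ ⋂ x ∈ K, closure {w | Reach φ x w} := by
  have hsubK : ∀ x ∈ K, {w | Reach φ x w} ⊆ K := by
    intro x hx w hw
    induction hw with
    | refl => exact hx
    | step z i t ht h ih => exact hKinv i t ht z ih
  have hΓK : (⋂ x ∈ K, closure {w | Reach φ x w}) ⊆ K := by
    obtain ⟨x0, hx0⟩ := hKne
    intro y hy
    exact hK.isClosed.closure_subset_iff.2 (hsubK x0 hx0) (Set.mem_iInter₂.1 hy x0 hx0)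
  constructor
  · exact hK.of_isClosed_subset (isClosed_biInter fun x _ => isClosed_closure) hΓK
  · intro y hy i t ht
    refine Set.mem_iInter₂.2 fun x hx => ?_
    have hy' := Set.mem_iInter₂.1 hy x hx
    have hc : Continuous fun z => φ i t z :=
      (hcont i).comp (continuous_const.prodMk continuous_id)
    have hmem : φ i t y ∈ closure ((fun z => φ i t z) '' {w | Reach φ x w}) :=
      image_closure_subset_closure_image hc ⟨y, hy', rfl⟩
    refine closure_mono ?_ hmem
    rintro _ ⟨w, hw, rfl⟩
    exact Reach.step x w i t ht hw
end
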